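/- arXiv:2108.12314 — 4 statements merged into one kernel-verified Lean document; each statement's English description precedes it below -/
import Mathlib

section
/- The third central moment γ(a) = a/(a+3) − 3·a²/((a+2)(a+1)) + 2·(a/(a+1))³ of a Beta(a,1) distribution satisfies −0.0075 < γ(a) < 0.2222 for all a > 0. -/
/-- The third central moment `γ(a)` of a Beta(a,1) distribution satisfies
`-0.0075 < γ(a) < 0.2222` for all `a > 0`. -/
theorem beta_a1_third_central_moment_bounds (a : ℝ) (ha : 0 < a) :
    -0.0075 < a / (a + 3) - 3 * a ^ 2 / ((a + 2) * (a + 1)) + 2 * (a / (a + 1)) ^ 3 ∧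
      a / (a + 3) - 3 * a ^ 2 / ((a + 2) * (a + 1)) + 2 * (a / (a + 1)) ^ 3 < 0.2222 := by
  have h1 : (0:ℝ) < a + 1 := by linarith
  have h2 : (0:ℝ) < a + 2 := by linarith
  have h3 : (0:ℝ) < a + 3 := by linarith
  have hD : (0:ℝ) < (a+3) * (a+2) * (a+1)^3 := by positivity
  have heq : a / (a + 3) - 3 * a ^ 2 / ((a + 2) * (a + 1)) + 2 * (a / (a + 1)) ^ 3
      = (2*a - 2*a^2) / ((a+3) * (a+2) * (a+1)^3) := by
    field_simp
    ring
  rw [heq]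
  constructor
  · rw [lt_div_iff₀ hD]
    nlinarith [mul_nonneg (pow_nonneg ha.le 3) (sq_nonneg (a-2)),
      mul_nonneg (pow_nonneg ha.le 2) (sq_nonneg (a-2)),
      mul_nonneg ha.le (sq_nonneg (a-2)), sq_nonneg (a-2), sq_nonneg (a^2-2*a),
      mul_nonneg ha.le (sq_nonneg (a-3)),
      mul_nonneg (pow_nonneg ha.le 3) (sq_nonneg (a-3)), ha.le]
  · rw [div_lt_iff₀ hD]
    nlinarith [mul_pos ha ha, mul_pos (mul_pos ha ha) ha, sq_nonneg (a-1), sq_nonneg (a*a)]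
end

section
/- Under the spherical mixture model, E[X ⊗ X] − σ̄²·I = Σ_{k=1}^K w_k · μ_k ⊗ μ_k, where σ̄² is the smallest eigenvalue of Cov(X). -/
/-! Integration against the mixture is the `w`-weighted sum of the component integrals, and in
each component `E[xᵢ xⱼ] = Cov(xᵢ, xⱼ) + μᵢ μⱼ = δᵢⱼ σ² + μᵢ μⱼ`. -/

open MeasureTheory ProbabilityTheory

lemma integral_sum_ofReal_smul_measure {ι Ω : Type*} [MeasurableSpace Ω] (s : Finset ι)
    {w : ι → ℝ} (hw : ∀ k ∈ s, 0 ≤ w k) {ν : ι → Measure Ω} {f : Ω → ℝ}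
    (hf : ∀ k ∈ s, Integrable f (ν k)) :
    ∫ x, f x ∂(∑ k ∈ s, ENNReal.ofReal (w k) • ν k) = ∑ k ∈ s, w k * ∫ x, f x ∂ν k := by
  rw [integral_finsetSum_measure fun k hk => (hf k hk).smul_measure ENNReal.ofReal_ne_top]
  refine Finset.sum_congr rfl fun k hk => ?_
  rw [integral_smul_measure, ENNReal.toReal_ofReal (hw k hk), smul_eq_mul]

theorem mixture_second_moment_general {M K : ℕ}
    (w : Fin K → ℝ) (hw : ∀ k, 0 ≤ w k)
    (μk : Fin K → Fin M → ℝ) (σ2 : Fin K → ℝ)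
    (ν : Fin K → Measure (Fin M → ℝ)) (hprob : ∀ k, IsProbabilityMeasure (ν k))
    (hint2 : ∀ k i j, Integrable (fun x => x i * x j) (ν k))
    (hmean : ∀ k i, ∫ x, x i ∂(ν k) = μk k i)
    (hcov : ∀ k i j, ∫ x, (x i - μk k i) * (x j - μk k j) ∂(ν k) =
      if i = j then σ2 k else 0)
    (P : Measure (Fin M → ℝ)) (hP : P = ∑ k, ENNReal.ofReal (w k) • ν k)
    (σbar2 : ℝ) (hσbar2 : σbar2 = ∑ k, w k * σ2 k) :
    ∀ i j, (∫ x, x i * x j ∂P) - (if i = j then σbar2 else 0) =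
      ∑ k, w k * (μk k i * μk k j) := by
  intro i j
  have hL2 : ∀ k i, MemLp (fun x : Fin M → ℝ => x i) 2 (ν k) := fun k i =>
    (memLp_two_iff_integrable_sq (measurable_pi_apply i).aestronglyMeasurable).2
      (by simpa only [sq] using hint2 k i i)
  have hcomponent : ∀ k, ∫ x, x i * x j ∂(ν k) =
      (if i = j then σ2 k else 0) + μk k i * μk k j := by
    intro k
    have hcov_eq := covariance_eq_sub (μ := ν k) (hL2 k i) (hL2 k j)
    rw [covariance, hmean, hmean, hcov] at hcov_eq
    rw [hcov_eq]
    simp only [Pi.mul_apply, sub_add_cancel]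
  rw [hP, integral_sum_ofReal_smul_measure _ (fun k _ => hw k) (fun k _ => hint2 k i j), hσbar2]
  simp_rw [hcomponent, mul_add, Finset.sum_add_distrib]
  split_ifs <;> simp

/-- Under the spherical mixture model `P = ∑ k, w k • ν k` (component means `μk k`,
within-component independent coordinates of common variance `σ2 k`), the second-moment
matrix satisfies `E[X ⊗ X] - σ̄² I = ∑ k, w k • (μk k ⊗ μk k)` entrywise, where
`σ̄² = ∑ k, w k σ2 k`. -/
theorem mixture_second_moment {M K : ℕ}
    (w : Fin K → ℝ) (hw : ∀ k, 0 ≤ w k) (hw1 : ∑ k, w k = 1)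
    (μk : Fin K → Fin M → ℝ) (σ2 : Fin K → ℝ) (hσ2 : ∀ k, 0 ≤ σ2 k)
    (ν : Fin K → Measure (Fin M → ℝ)) (hprob : ∀ k, IsProbabilityMeasure (ν k))
    (hint1 : ∀ k i, Integrable (fun x => x i) (ν k))
    (hint2 : ∀ k i j, Integrable (fun x => x i * x j) (ν k))
    (hmean : ∀ k i, ∫ x, x i ∂(ν k) = μk k i)
    (hcov : ∀ k i j, ∫ x, (x i - μk k i) * (x j - μk k j) ∂(ν k) =
      if i = j then σ2 k else 0)
    (P : Measure (Fin M → ℝ)) (hP : P = ∑ k, ENNReal.ofReal (w k) • ν k)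
    (σbar2 : ℝ) (hσbar2 : σbar2 = ∑ k, w k * σ2 k) :
    ∀ i j, (∫ x, x i * x j ∂P) - (if i = j then σbar2 else 0) =
      ∑ k, w k * (μk k i * μk k j) :=
  mixture_second_moment_general w hw μk σ2 ν hprob hint2 hmean hcov P hP σbar2 hσbar2
end

section
/- Under the spherical mixture model, the third moment tensor satisfies E[X⊗X⊗X] = Σ_k w_k μ_k⊗μ_k⊗μ_k + Σ_{i=1}^M (m₁⊗e_i⊗e_i + e_i⊗m₁⊗e_i + e_i⊗e_i⊗m₁) + Σ_{i=1}^M γ̄_i · e_i⊗e_i⊗e_i, where m₁ = Σ_k w_k σ_k² μ_k and γ̄_i = Σ_k w_k γ_i^(k) is the averaged coordinate-wise third central moment. -/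
/-!
Expanding `x_i x_j x_l` around the component mean writes the raw third moment of a component
as its central third moment, plus each mean coordinate times the complementary covariance, plus
the product of the means. The spherical hypotheses make the covariance `σ² I` and the central
third moment diagonal, which produces the `e_s ⊗ e_s` and `e_s ⊗ e_s ⊗ e_s` terms; integrating
against the mixture averages these component formulas with the weights `w`.
-/

open MeasureTheory
open scoped ProbabilityTheory

section CentralMoments

variable {Ω : Type*} [MeasurableSpace Ω] {μ : Measure Ω} [IsProbabilityMeasure μ] {f g h : Ω → ℝ}

theorem integral_sub_mul_sub (hf : Integrable f μ) (hg : Integrable g μ)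
    (hfg : Integrable (fun ω => f ω * g ω) μ) (a b : ℝ) :
    ∫ ω, (f ω - a) * (g ω - b) ∂μ =
      ∫ ω, f ω * g ω ∂μ - a * ∫ ω, g ω ∂μ - b * ∫ ω, f ω ∂μ + a * b := by
  have expand : (fun ω => (f ω - a) * (g ω - b)) =
      fun ω => f ω * g ω - a * g ω - b * f ω + a * b := by
    funext ω; ring
  rw [expand, integral_add (by fun_prop) (by fun_prop), integral_sub (by fun_prop) (by fun_prop),
    integral_sub hfg (by fun_prop), integral_const_mul, integral_const_mul, integral_const,
    probReal_univ, one_smul]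

theorem integral_sub_mul_sub_mul_sub (hf : Integrable f μ) (hg : Integrable g μ)
    (hh : Integrable h μ) (hfg : Integrable (fun ω => f ω * g ω) μ)
    (hfh : Integrable (fun ω => f ω * h ω) μ) (hgh : Integrable (fun ω => g ω * h ω) μ)
    (hfgh : Integrable (fun ω => f ω * g ω * h ω) μ) (a b c : ℝ) :
    ∫ ω, (f ω - a) * (g ω - b) * (h ω - c) ∂μ =
      ∫ ω, f ω * g ω * h ω ∂μ - a * ∫ ω, g ω * h ω ∂μ - b * ∫ ω, f ω * h ω ∂μ
        - c * ∫ ω, f ω * g ω ∂μ + a * b * ∫ ω, h ω ∂μ + a * c * ∫ ω, g ω ∂μ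
        + b * c * ∫ ω, f ω ∂μ - a * b * c := by
  have expand : (fun ω => (f ω - a) * (g ω - b) * (h ω - c)) =
      fun ω => f ω * g ω * h ω - a * (g ω * h ω) - b * (f ω * h ω) - c * (f ω * g ω)
        + a * b * h ω + a * c * g ω + b * c * f ω - a * b * c := by
    funext ω; ring
  rw [expand, integral_sub (by fun_prop) (by fun_prop), integral_add (by fun_prop) (by fun_prop),
    integral_add (by fun_prop) (by fun_prop), integral_add (by fun_prop) (by fun_prop),
    integral_sub (by fun_prop) (by fun_prop), integral_sub (by fun_prop) (by fun_prop),
    integral_sub hfgh (by fun_prop)]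
  simp only [integral_const_mul, integral_const, probReal_univ, one_smul]

theorem integral_mul_mul_eq_centered (hf : Integrable f μ) (hg : Integrable g μ)
    (hh : Integrable h μ) (hfg : Integrable (fun ω => f ω * g ω) μ)
    (hfh : Integrable (fun ω => f ω * h ω) μ) (hgh : Integrable (fun ω => g ω * h ω) μ)
    (hfgh : Integrable (fun ω => f ω * g ω * h ω) μ) :
    ∫ ω, f ω * g ω * h ω ∂μ =
      ∫ ω, (f ω - μ[f]) * (g ω - μ[g]) * (h ω - μ[h]) ∂μ
        + μ[f] * ∫ ω, (g ω - μ[g]) * (h ω - μ[h]) ∂μ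
        + μ[g] * ∫ ω, (f ω - μ[f]) * (h ω - μ[h]) ∂μ
        + μ[h] * ∫ ω, (f ω - μ[f]) * (g ω - μ[g]) ∂μ
        + μ[f] * μ[g] * μ[h] := by
  rw [integral_sub_mul_sub_mul_sub hf hg hh hfg hfh hgh hfgh, integral_sub_mul_sub hg hh hgh,
    integral_sub_mul_sub hf hh hfh, integral_sub_mul_sub hf hg hfg]
  ring

end CentralMoments

theorem integral_finset_sum_ofReal_smul_measure {ι Ω E : Type*} [MeasurableSpace Ω]
    [NormedAddCommGroup E] [NormedSpace ℝ E] {s : Finset ι} {w : ι → ℝ} (hw : ∀ k ∈ s, 0 ≤ w k)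
    {ν : ι → Measure Ω} {f : Ω → E} (hf : ∀ k ∈ s, Integrable f (ν k)) :
    ∫ x, f x ∂(∑ k ∈ s, ENNReal.ofReal (w k) • ν k) = ∑ k ∈ s, w k • ∫ x, f x ∂(ν k) := by
  rw [integral_finsetSum_measure fun k hk => (hf k hk).smul_measure ENNReal.ofReal_ne_top]
  refine Finset.sum_congr rfl fun k hk => ?_
  rw [integral_smul_measure, ENNReal.toReal_ofReal (hw k hk)]

theorem mixture_third_moment_general {M K : ℕ}
    (w : Fin K → ℝ) (hw : ∀ k, 0 ≤ w k)
    (μk : Fin K → Fin M → ℝ) (σ2 : Fin K → ℝ)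
    (γ : Fin K → Fin M → ℝ)
    (ν : Fin K → Measure (Fin M → ℝ)) (hprob : ∀ k, IsProbabilityMeasure (ν k))
    (hint1 : ∀ k i, Integrable (fun x => x i) (ν k))
    (hint2 : ∀ k i j, Integrable (fun x => x i * x j) (ν k))
    (hint3 : ∀ k i j l, Integrable (fun x => x i * x j * x l) (ν k))
    (hmean : ∀ k i, ∫ x, x i ∂(ν k) = μk k i)
    (hcov : ∀ k i j, ∫ x, (x i - μk k i) * (x j - μk k j) ∂(ν k) =
      if i = j then σ2 k else 0)
    (hthird : ∀ k i j l,
      ∫ x, (x i - μk k i) * (x j - μk k j) * (x l - μk k l) ∂(ν k) =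
        if i = j ∧ j = l then γ k i else 0)
    (P : Measure (Fin M → ℝ)) (hP : P = ∑ k, ENNReal.ofReal (w k) • ν k)
    (m₁ : Fin M → ℝ) (hm₁ : ∀ i, m₁ i = ∑ k, w k * σ2 k * μk k i)
    (γbar : Fin M → ℝ) (hγbar : ∀ i, γbar i = ∑ k, w k * γ k i) :
    ∀ i j l, ∫ x, x i * x j * x l ∂P =
      (∑ k, w k * (μk k i * μk k j * μk k l)) +
        (if j = l then m₁ i else 0) + (if i = l then m₁ j else 0) +
        (if i = j then m₁ l else 0) +
        (if i = j ∧ j = l then γbar i else 0) := by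
  intro i j l
  have component : ∀ k, ∫ x, x i * x j * x l ∂(ν k) =
      μk k i * μk k j * μk k l + (if j = l then σ2 k * μk k i else 0)
        + (if i = l then σ2 k * μk k j else 0) + (if i = j then σ2 k * μk k l else 0)
        + (if i = j ∧ j = l then γ k i else 0) := fun k => by
    have := hprob k
    rw [integral_mul_mul_eq_centered (hint1 k i) (hint1 k j) (hint1 k l) (hint2 k i j)
      (hint2 k i l) (hint2 k j l) (hint3 k i j l)]
    simp only [hmean, hthird, hcov]
    split_ifs <;> ring
  rw [hP, integral_finset_sum_ofReal_smul_measure (fun k _ => hw k) (fun k _ => hint3 k i j l)]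
  simp only [smul_eq_mul, component]
  simp only [hm₁, hγbar, mul_add, mul_ite, mul_zero, mul_assoc, Finset.sum_add_distrib,
    Finset.sum_ite_irrel, Finset.sum_const_zero]

/-- Under the spherical mixture model `P = ∑ k, w k • ν k` (component means `μk k`,
within-component independent coordinates with variance `σ2 k` and coordinate-wise third
central moments `γ k`), the third moment tensor satisfies, entrywise at `(i, j, l)`:
`E[X⊗X⊗X] = ∑ k, w k μk⊗μk⊗μk + ∑ s (m₁⊗e_s⊗e_s + e_s⊗m₁⊗e_s + e_s⊗e_s⊗m₁)
+ ∑ s γ̄_s e_s⊗e_s⊗e_s`, where `m₁ = ∑ k, w k σ2 k • μk k` and `γ̄ = ∑ k, w k • γ k`. -/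
theorem mixture_third_moment {M K : ℕ}
    (w : Fin K → ℝ) (hw : ∀ k, 0 ≤ w k) (hw1 : ∑ k, w k = 1)
    (μk : Fin K → Fin M → ℝ) (σ2 : Fin K → ℝ) (hσ2 : ∀ k, 0 ≤ σ2 k)
    (γ : Fin K → Fin M → ℝ)
    (ν : Fin K → Measure (Fin M → ℝ)) (hprob : ∀ k, IsProbabilityMeasure (ν k))
    (hint1 : ∀ k i, Integrable (fun x => x i) (ν k))
    (hint2 : ∀ k i j, Integrable (fun x => x i * x j) (ν k))
    (hint3 : ∀ k i j l, Integrable (fun x => x i * x j * x l) (ν k))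
    (hmean : ∀ k i, ∫ x, x i ∂(ν k) = μk k i)
    (hcov : ∀ k i j, ∫ x, (x i - μk k i) * (x j - μk k j) ∂(ν k) =
      if i = j then σ2 k else 0)
    (hthird : ∀ k i j l,
      ∫ x, (x i - μk k i) * (x j - μk k j) * (x l - μk k l) ∂(ν k) =
        if i = j ∧ j = l then γ k i else 0)
    (P : Measure (Fin M → ℝ)) (hP : P = ∑ k, ENNReal.ofReal (w k) • ν k)
    (m₁ : Fin M → ℝ) (hm₁ : ∀ i, m₁ i = ∑ k, w k * σ2 k * μk k i)
    (γbar : Fin M → ℝ) (hγbar : ∀ i, γbar i = ∑ k, w k * γ k i) :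
    ∀ i j l, ∫ x, x i * x j * x l ∂P =
      (∑ k, w k * (μk k i * μk k j * μk k l)) +
        (if j = l then m₁ i else 0) + (if i = l then m₁ j else 0) +
        (if i = j then m₁ l else 0) +
        (if i = j ∧ j = l then γbar i else 0) :=
  mixture_third_moment_general w hw μk σ2 γ ν hprob hint1 hint2 hint3 hmean hcov hthird P hP m₁ hm₁
    γbar hγbar
end

section
/- Under the spherical mixture model, if v is a unit eigenvector of Cov(X) corresponding to the smallest eigenvalue σ̄², then E[X·(vᵀ(X − μ̄))²] = Σ_k w_k (σ_k² μ_k + v ⊙ v ⊙ γ_k), where γ_k is the vector of coordinate-wise third central moments of component k and ⊙ is the entrywise product. -/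
open MeasureTheory

section Aux

variable {M : ℕ} (ν : Measure (Fin M → ℝ)) [IsProbabilityMeasure ν]
variable (h1 : ∀ i, Integrable (fun x => x i) ν)
variable (h2 : ∀ i j, Integrable (fun x => x i * x j) ν)
variable (h3 : ∀ i j l, Integrable (fun x => x i * x j * x l) ν)

include h1 h2 in
lemma intQ (j l : Fin M) (a b : ℝ) :
    Integrable (fun x => (x j - a) * (x l - b)) ν := by
  have : (fun x : Fin M → ℝ => (x j - a) * (x l - b)) =
      fun x => x j * x l - b * x j - a * x l + a * b := by funext x; ring
  rw [this]
  exact (((h2 j l).sub ((h1 j).const_mul b)).sub ((h1 l).const_mul a)).add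
    (integrable_const (a * b))

include h1 h2 h3 in
lemma intT (i j l : Fin M) (a b : ℝ) :
    Integrable (fun x => x i * (x j - a) * (x l - b)) ν := by
  have : (fun x : Fin M → ℝ => x i * (x j - a) * (x l - b)) =
      fun x => x i * x j * x l - b * (x i * x j) - a * (x i * x l) + (a * b) * x i := by
    funext x; ring
  rw [this]
  exact (((h3 i j l).sub ((h2 i j).const_mul b)).sub ((h2 i l).const_mul a)).add
    ((h1 i).const_mul (a * b))

include h1 h2 h3 in
lemma intT3 (i j l : Fin M) (c a b : ℝ) :
    Integrable (fun x => (x i - c) * (x j - a) * (x l - b)) ν := by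
  have : (fun x : Fin M → ℝ => (x i - c) * (x j - a) * (x l - b)) =
      fun x => x i * (x j - a) * (x l - b) - c * ((x j - a) * (x l - b)) := by
    funext x; ring
  rw [this]
  exact (intT ν h1 h2 h3 i j l a b).sub ((intQ ν h1 h2 j l a b).const_mul c)

end Aux

/-- Under the spherical mixture model `P = ∑ k, w k • ν k`, if `v` is a unit vector lying
in the null space of `∑ k, w k (μk k - μ̄)(μk k - μ̄)ᵀ` (e.g. a unit eigenvector of
`Cov(X)` for the smallest eigenvalue `σ̄²`), then
`E[X (vᵀ(X - μ̄))²] = ∑ k, w k (σ2 k • μk k + v ⊙ v ⊙ γ k)` entrywise, where `γ k` is the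
vector of coordinate-wise third central moments of component `k`. -/
theorem mixture_first_smom_vector {M K : ℕ}
    (w : Fin K → ℝ) (hw : ∀ k, 0 ≤ w k) (hw1 : ∑ k, w k = 1)
    (μk : Fin K → Fin M → ℝ) (σ2 : Fin K → ℝ) (hσ2 : ∀ k, 0 ≤ σ2 k)
    (γ : Fin K → Fin M → ℝ)
    (ν : Fin K → Measure (Fin M → ℝ)) (hprob : ∀ k, IsProbabilityMeasure (ν k))
    (hint1 : ∀ k i, Integrable (fun x => x i) (ν k))
    (hint2 : ∀ k i j, Integrable (fun x => x i * x j) (ν k))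
    (hint3 : ∀ k i j l, Integrable (fun x => x i * x j * x l) (ν k))
    (hmean : ∀ k i, ∫ x, x i ∂(ν k) = μk k i)
    (hcov : ∀ k i j, ∫ x, (x i - μk k i) * (x j - μk k j) ∂(ν k) =
      if i = j then σ2 k else 0)
    (hthird : ∀ k i j l,
      ∫ x, (x i - μk k i) * (x j - μk k j) * (x l - μk k l) ∂(ν k) =
        if i = j ∧ j = l then γ k i else 0)
    (P : Measure (Fin M → ℝ)) (hP : P = ∑ k, ENNReal.ofReal (w k) • ν k)
    (μbar : Fin M → ℝ) (hμbar : ∀ i, μbar i = ∑ k, w k * μk k i)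
    (v : Fin M → ℝ) (hv1 : ∑ i, v i ^ 2 = 1)
    (hvnull : ∀ k, ∑ j, v j * (μk k j - μbar j) = 0) :
    ∀ i, ∫ x, x i * (∑ j, v j * (x j - μbar j)) ^ 2 ∂P =
      ∑ k, w k * (σ2 k * μk k i + v i * v i * γ k i) := by
  intro i
  -- the integrand, rewritten as a double sum in the μk-centered form, per component
  have hshift : ∀ k (x : Fin M → ℝ),
      ∑ j, v j * (x j - μbar j) = ∑ j, v j * (x j - μk k j) := by
    intro k x
    have h0 := hvnull k
    calc ∑ j, v j * (x j - μbar j)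
        = ∑ j, (v j * (x j - μk k j) + v j * (μk k j - μbar j)) := by
          refine Finset.sum_congr rfl fun j _ => by ring
      _ = (∑ j, v j * (x j - μk k j)) + ∑ j, v j * (μk k j - μbar j) :=
          Finset.sum_add_distrib
      _ = ∑ j, v j * (x j - μk k j) := by rw [h0, add_zero]
  have hexp : ∀ k (x : Fin M → ℝ),
      x i * (∑ j, v j * (x j - μbar j)) ^ 2 =
        ∑ j, ∑ l, (v j * v l) * (x i * (x j - μk k j) * (x l - μk k l)) := by
    intro k x
    rw [hshift k x, sq, Finset.sum_mul_sum, Finset.mul_sum]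
    refine Finset.sum_congr rfl fun j _ => ?_
    rw [Finset.mul_sum]
    exact Finset.sum_congr rfl fun l _ => by ring
  -- integrability per component
  have hInt : ∀ k, Integrable (fun x => x i * (∑ j, v j * (x j - μbar j)) ^ 2) (ν k) := by
    intro k
    haveI := hprob k
    have : (fun x : Fin M → ℝ => x i * (∑ j, v j * (x j - μbar j)) ^ 2) =
        fun x => ∑ j, ∑ l, (v j * v l) * (x i * (x j - μk k j) * (x l - μk k l)) := by
      funext x; exact hexp k x
    rw [this]
    exact integrable_finset_sum _ fun j _ => integrable_finset_sum _ fun l _ =>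
      ((intT (ν k) (hint1 k) (hint2 k) (hint3 k) i j l _ _).const_mul _)
  -- per-component integral
  have hcomp : ∀ k, ∫ x, x i * (∑ j, v j * (x j - μbar j)) ^ 2 ∂(ν k) =
      σ2 k * μk k i + v i * v i * γ k i := by
    intro k
    haveI := hprob k
    have e1 : (fun x : Fin M → ℝ => x i * (∑ j, v j * (x j - μbar j)) ^ 2) =
        fun x => ∑ j, ∑ l, (v j * v l) * (x i * (x j - μk k j) * (x l - μk k l)) := by
      funext x; exact hexp k x
    rw [e1]
    rw [integral_finset_sum _ fun j _ => integrable_finset_sum _ fun l _ =>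
      ((intT (ν k) (hint1 k) (hint2 k) (hint3 k) i j l _ _).const_mul _)]
    have e2 : ∀ j, ∫ x, ∑ l, (v j * v l) * (x i * (x j - μk k j) * (x l - μk k l)) ∂(ν k)
        = ∑ l, (v j * v l) *
          ((if i = j ∧ j = l then γ k i else 0) + μk k i * (if j = l then σ2 k else 0)) := by
      intro j
      rw [integral_finset_sum _ fun l _ =>
        ((intT (ν k) (hint1 k) (hint2 k) (hint3 k) i j l _ _).const_mul _)]
      refine Finset.sum_congr rfl fun l _ => ?_
      rw [integral_const_mul]
      congr 1
      have e3 : (fun x : Fin M → ℝ => x i * (x j - μk k j) * (x l - μk k l)) =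
          fun x => (x i - μk k i) * (x j - μk k j) * (x l - μk k l)
            + μk k i * ((x j - μk k j) * (x l - μk k l)) := by
        funext x; ring
      rw [e3, integral_add (intT3 (ν k) (hint1 k) (hint2 k) (hint3 k) i j l _ _ _)
          ((intQ (ν k) (hint1 k) (hint2 k) j l _ _).const_mul _),
        integral_const_mul, hthird k i j l, hcov k j l]
    rw [Finset.sum_congr rfl fun j _ => e2 j]
    -- evaluate the double sum of ifs
    have hvv : ∑ j, v j * v j = 1 := by
      rw [← hv1]; exact Finset.sum_congr rfl fun j _ => by ring
    simp only [mul_add, Finset.sum_add_distrib, ite_and, mul_ite, mul_zero]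
    rw [Finset.sum_comm (f := fun j l => if i = j then if j = l then v j * v l * γ k i else 0 else 0)]
    simp only [Finset.sum_ite_eq, Finset.mem_univ, if_true]
    rw [← Finset.sum_mul, hvv, one_mul]
    ring
  -- sum over mixture components
  rw [hP, integral_finset_sum_measure fun k _ =>
    (hInt k).smul_measure ENNReal.ofReal_ne_top]
  refine Finset.sum_congr rfl fun k _ => ?_
  rw [integral_smul_measure, hcomp k, ENNReal.toReal_ofReal (hw k), smul_eq_mul]
end
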